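/- Let F : ℝⁿ → ℝ be C² with minimizer w*, M-Lipschitz Hessian, and let Ĥ be symmetric positive definite. If w⁺ = w − Ĥ⁻¹∇F(w), then ‖w⁺ − w*‖ ≤ (‖Ĥ − ∇²F(w)‖ / λ_min(Ĥ)) ‖w − w*‖ + (M / (2 λ_min(Ĥ))) ‖w − w*‖². -/

import Mathlib

/-!
With `e = w − w*` and `H = ∇²F(w)`, the vanishing of `∇F(w*)` gives
`Ĥ(w⁺ − w*) = (Ĥ − H)e − (∇F(w) − ∇F(w*) − He)`. The second term is the first-order Taylor
remainder of `∇F` at `w`, of size at most `(M/2)‖e‖²` because `∇²F` is `M`-Lipschitz, and the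
coercivity `μ‖v‖² ≤ ⟪Ĥv, v⟫` yields `μ‖w⁺ − w*‖ ≤ ‖Ĥ(w⁺ − w*)‖`.
-/

open scoped InnerProductSpace

theorem norm_sub_sub_fderiv_apply_le {E F : Type*} [NormedAddCommGroup E] [NormedSpace ℝ E]
    [NormedAddCommGroup F] [NormedSpace ℝ F] {g : E → F} (hg : Differentiable ℝ g) {M : ℝ}
    {a b : E} (hlip : ∀ x, ‖fderiv ℝ g x - fderiv ℝ g b‖ ≤ M * ‖x - b‖) :
    ‖g b - g a - fderiv ℝ g b (b - a)‖ ≤ M / 2 * ‖b - a‖ ^ 2 := by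
  set e := b - a
  set φ : ℝ → F := fun t => g (a + t • e) - g a - t • fderiv ℝ g b e
  have hφ : ∀ t, HasDerivAt φ (fderiv ℝ g (a + t • e) e - fderiv ℝ g b e) t := fun t =>
    ((((hg _).hasFDerivAt.comp_hasDerivAt t
      (((hasDerivAt_id t).smul_const e).const_add a)).sub_const (g a)).sub
      ((hasDerivAt_id t).smul_const _)).congr_deriv (by simp)
  -- The factor `1/2` comes from fencing `φ` by an antiderivative of the bound on `‖φ'‖`.
  have hB : ∀ t, HasDerivAt (fun t => M * ‖e‖ ^ 2 * (t - t ^ 2 / 2)) (M * ‖e‖ ^ 2 * (1 - t)) t :=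
    fun t => (((hasDerivAt_id t).sub ((hasDerivAt_pow 2 t).div_const 2)).const_mul _).congr_deriv
      (by simp)
  have bound : ∀ t ∈ Set.Ico (0 : ℝ) 1,
      ‖fderiv ℝ g (a + t • e) e - fderiv ℝ g b e‖ ≤ M * ‖e‖ ^ 2 * (1 - t) := by
    intro t ht
    have hdist : ‖a + t • e - b‖ = (1 - t) * ‖e‖ := by
      rw [show a + t • e - b = (t - 1) • e by simp only [e]; module, norm_smul,
        Real.norm_eq_abs, abs_of_nonpos (by linarith [ht.2]), neg_sub]
    calc ‖fderiv ℝ g (a + t • e) e - fderiv ℝ g b e‖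
        ≤ ‖fderiv ℝ g (a + t • e) - fderiv ℝ g b‖ * ‖e‖ :=
          (fderiv ℝ g (a + t • e) - fderiv ℝ g b).le_opNorm e
      _ ≤ M * ‖a + t • e - b‖ * ‖e‖ := by gcongr; exact hlip _
      _ = M * ‖e‖ ^ 2 * (1 - t) := by rw [hdist]; ring
  have := image_norm_le_of_norm_deriv_right_le_deriv_boundary
    (fun t _ => (hφ t).continuousAt.continuousWithinAt) (fun t _ => (hφ t).hasDerivWithinAt)
    (by simp [φ]) hB bound (Set.right_mem_Icc.2 zero_le_one)
  convert this using 1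
  · simp [φ, e]
  · ring

theorem IsLocalMin.gradient_eq_zero {E : Type*} [NormedAddCommGroup E] [InnerProductSpace ℝ E]
    [CompleteSpace E] {f : E → ℝ} {a : E} (h : IsLocalMin f a) : gradient f a = 0 := by
  rw [gradient, h.fderiv_eq_zero, map_zero]

theorem ContDiff.differentiable_gradient {E : Type*} [NormedAddCommGroup E]
    [InnerProductSpace ℝ E] [CompleteSpace E] {f : E → ℝ} (hf : ContDiff ℝ 2 f) :
    Differentiable ℝ (gradient f) := by
  have hgrad : gradient f = (InnerProductSpace.toDual ℝ E).symm ∘ fderiv ℝ f := rfl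
  rw [hgrad]
  exact (InnerProductSpace.toDual ℝ E).symm.differentiable.comp
    ((hf.fderiv_right (m := 1) le_rfl).differentiable one_ne_zero)

theorem mul_norm_le_norm_apply_of_le_inner {E : Type*} [NormedAddCommGroup E]
    [InnerProductSpace ℝ E] {A : E →L[ℝ] E} {μ : ℝ} (hA : ∀ v, μ * ‖v‖ ^ 2 ≤ ⟪A v, v⟫_ℝ)
    (v : E) : μ * ‖v‖ ≤ ‖A v‖ := by
  rcases (norm_nonneg v).eq_or_lt with hv | hv
  · rw [← hv, mul_zero]; exact norm_nonneg _
  · refine le_of_mul_le_mul_right ?_ hv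
    calc μ * ‖v‖ * ‖v‖ = μ * ‖v‖ ^ 2 := by ring
      _ ≤ ⟪A v, v⟫_ℝ := hA v
      _ ≤ ‖A v‖ * ‖v‖ := real_inner_le_norm _ _

theorem newton_error_recursion_general
    {n : ℕ} (F : EuclideanSpace ℝ (Fin n) → ℝ) (hF : ContDiff ℝ 2 F)
    (wstar : EuclideanSpace ℝ (Fin n)) (hmin : ∀ v, F wstar ≤ F v)
    (M : ℝ)
    (hlip : ∀ x y : EuclideanSpace ℝ (Fin n),
      ‖fderiv ℝ (gradient F) x - fderiv ℝ (gradient F) y‖ ≤ M * ‖x - y‖)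
    (Hhat : EuclideanSpace ℝ (Fin n) →L[ℝ] EuclideanSpace ℝ (Fin n))
    (μ : ℝ) (hμ : 0 < μ) (hpd : ∀ v, μ * ‖v‖ ^ 2 ≤ ⟪Hhat v, v⟫_ℝ)
    (w p wplus : EuclideanSpace ℝ (Fin n))
    (hp : Hhat p = gradient F w) (hwplus : wplus = w - p) :
    ‖wplus - wstar‖ ≤
      (‖Hhat - fderiv ℝ (gradient F) w‖ / μ) * ‖w - wstar‖ +
        (M / (2 * μ)) * ‖w - wstar‖ ^ 2 := by
  set H := fderiv ℝ (gradient F) w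
  have hstationary : gradient F wstar = 0 :=
    IsLocalMin.gradient_eq_zero (Filter.Eventually.of_forall hmin)
  have htaylor : ‖gradient F w - gradient F wstar - H (w - wstar)‖ ≤ M / 2 * ‖w - wstar‖ ^ 2 :=
    norm_sub_sub_fderiv_apply_le hF.differentiable_gradient fun x => hlip x w
  have herror : Hhat (wplus - wstar) =
      (Hhat - H) (w - wstar) - (gradient F w - gradient F wstar - H (w - wstar)) := by
    rw [hwplus, hstationary, sub_right_comm, map_sub, hp, sub_apply]
    abel
  have hbound : μ * ‖wplus - wstar‖ ≤ ‖Hhat - H‖ * ‖w - wstar‖ + M / 2 * ‖w - wstar‖ ^ 2 :=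
    calc μ * ‖wplus - wstar‖ ≤ ‖Hhat (wplus - wstar)‖ := mul_norm_le_norm_apply_of_le_inner hpd _
      _ ≤ ‖(Hhat - H) (w - wstar)‖ + ‖gradient F w - gradient F wstar - H (w - wstar)‖ := by
        rw [herror]; exact norm_sub_le _ _
      _ ≤ ‖Hhat - H‖ * ‖w - wstar‖ + M / 2 * ‖w - wstar‖ ^ 2 :=
        add_le_add ((Hhat - H).le_opNorm _) htaylor
  calc ‖wplus - wstar‖ ≤ (‖Hhat - H‖ * ‖w - wstar‖ + M / 2 * ‖w - wstar‖ ^ 2) / μ := by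
        rwa [le_div_iff₀ hμ, mul_comm]
    _ = _ := by ring

/-- Error recursion for the Newton-type update `w⁺ = w − Ĥ⁻¹∇F(w)`:
`‖w⁺ − w*‖ ≤ (‖Ĥ − ∇²F(w)‖ / λmin(Ĥ)) ‖w − w*‖ + (M/(2 λmin(Ĥ))) ‖w − w*‖²`,
where `λmin(Ĥ) ≥ μ > 0` is a lower bound on the spectrum of the symmetric
positive definite operator `Ĥ`. -/
theorem newton_error_recursion
    {n : ℕ} (F : EuclideanSpace ℝ (Fin n) → ℝ) (hF : ContDiff ℝ 2 F)
    (hconv : ∀ x v : EuclideanSpace ℝ (Fin n),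
      0 ≤ ⟪(fderiv ℝ (gradient F) x) v, v⟫_ℝ)
    (wstar : EuclideanSpace ℝ (Fin n)) (hmin : ∀ v, F wstar ≤ F v)
    (M : ℝ) (hM : 0 ≤ M)
    (hlip : ∀ x y : EuclideanSpace ℝ (Fin n),
      ‖fderiv ℝ (gradient F) x - fderiv ℝ (gradient F) y‖ ≤ M * ‖x - y‖)
    (Hhat : EuclideanSpace ℝ (Fin n) →L[ℝ] EuclideanSpace ℝ (Fin n))
    (hsym : ∀ u v, ⟪Hhat u, v⟫_ℝ = ⟪u, Hhat v⟫_ℝ)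
    (μ : ℝ) (hμ : 0 < μ) (hpd : ∀ v, μ * ‖v‖ ^ 2 ≤ ⟪Hhat v, v⟫_ℝ)
    (w p wplus : EuclideanSpace ℝ (Fin n))
    (hp : Hhat p = gradient F w) (hwplus : wplus = w - p) :
    ‖wplus - wstar‖ ≤
      (‖Hhat - fderiv ℝ (gradient F) w‖ / μ) * ‖w - wstar‖ +
        (M / (2 * μ)) * ‖w - wstar‖ ^ 2 :=
  newton_error_recursion_general F hF wstar hmin M hlip Hhat μ hμ hpd w p wplus hp hwplus
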